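/- arXiv:1208.2824 — 4 statements merged into one kernel-verified Lean document; each statement's English description precedes it below -/
import Mathlib

section
/- Let I be the ideal in the polynomial ring C[z_0,...,z_n] generated by all monomials z_i z_j with 0 ≤ i < j ≤ n. Then for every k ≥ 1, the k-th power I^k is generated by the monomials z^γ with |γ| = 2k and γ_j ≤ k for all 0 ≤ j ≤ n. -/
/-!
Call `γ` balanced of order `k` if `|γ| = 2k` and `γ_j ≤ k` for all `j`. Adding `e_i + e_j` with
`i ≠ j` to a balanced exponent of order `k` gives one of order `k + 1`, and conversely every
balanced exponent of order `k + 1` arises this way: take for `i` and `j` the positions of the two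
largest entries, since a third entry equal to `k + 1` would force `|γ| ≥ 3(k + 1) > 2k + 2`.
Hence `I^(k+1) = I^k · I` is spanned by the balanced monomials of order `k + 1`, by induction
from `I^0 = (1)`.
-/

open MvPolynomial

open scoped Pointwise

section Exponents

variable {σ : Type*}

theorem Finsupp.sum_apply_le_degree (s : Finset σ) (γ : σ →₀ ℕ) : ∑ x ∈ s, γ x ≤ γ.degree := by
  classical
  calc ∑ x ∈ s, γ x ≤ ∑ x ∈ s ∪ γ.support, γ x :=
        Finset.sum_le_sum_of_subset Finset.subset_union_left
    _ = γ.degree := by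
      rw [Finsupp.degree_apply]
      exact (Finset.sum_subset Finset.subset_union_right
        fun x _ hx => Finsupp.notMem_support_iff.1 hx).symm

theorem Finsupp.apply_add_apply_add_apply_le_degree (γ : σ →₀ ℕ) {i j l : σ} (hij : i ≠ j)
    (hil : i ≠ l) (hjl : j ≠ l) : γ i + γ j + γ l ≤ γ.degree := by
  classical
  have := Finsupp.sum_apply_le_degree {i, j, l} γ
  rwa [Finset.sum_insert (by simp [hij, hil]), Finset.sum_insert (by simpa using hjl),
    Finset.sum_singleton, ← add_assoc] at this

def IsBalanced (k : ℕ) (γ : σ →₀ ℕ) : Prop :=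
  γ.degree = 2 * k ∧ ∀ j, γ j ≤ k

theorem isBalanced_zero_iff {γ : σ →₀ ℕ} : IsBalanced 0 γ ↔ γ = 0 := by
  refine ⟨fun h => (Finsupp.degree_eq_zero_iff γ).1 h.1, ?_⟩
  rintro rfl
  exact ⟨by simp, fun _ => le_rfl⟩

theorem IsBalanced.add_single_add_single {k : ℕ} {γ : σ →₀ ℕ}
    (h : IsBalanced k γ) {i j : σ} (hij : i ≠ j) :
    IsBalanced (k + 1) (γ + Finsupp.single i 1 + Finsupp.single j 1) := by
  classical
  refine ⟨?_, fun l => ?_⟩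
  · simp only [map_add, Finsupp.degree_single, h.1]
    ring
  · have := h.2 l
    simp only [Finsupp.coe_add, Pi.add_apply, Finsupp.single_apply]
    split_ifs <;> grind

theorem IsBalanced.exists_eq_add_single_add_single {k : ℕ} {γ : σ →₀ ℕ}
    (h : IsBalanced (k + 1) γ) :
    ∃ δ i j, i ≠ j ∧ IsBalanced k δ ∧ γ = δ + Finsupp.single i 1 + Finsupp.single j 1 := by
  classical
  obtain ⟨hdeg, hle⟩ := h
  have hsupp : γ.support.Nonempty := by
    rw [Finset.nonempty_iff_ne_empty, Ne, Finsupp.support_eq_empty,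
      ← Finsupp.degree_eq_zero_iff]
    omega
  obtain ⟨i, hi, hmax_i⟩ := γ.support.exists_max_image γ hsupp
  have hrest : (γ.support.erase i).Nonempty := by
    rw [Finset.nonempty_iff_ne_empty]
    intro hempty
    have := Finset.add_sum_erase γ.support γ hi
    rw [hempty, Finset.sum_empty, add_zero, ← Finsupp.degree_apply] at this
    have := hle i
    omega
  obtain ⟨j, hj, hmax_j⟩ := (γ.support.erase i).exists_max_image γ hrest
  obtain ⟨hji, hj⟩ := Finset.mem_erase.1 hj
  set δ := γ - (Finsupp.single i 1 + Finsupp.single j 1)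
  have hγ : γ = δ + Finsupp.single i 1 + Finsupp.single j 1 := by
    rw [add_assoc, tsub_add_cancel_of_le]
    intro l
    simp only [Finsupp.coe_add, Pi.add_apply, Finsupp.single_apply]
    have := Finsupp.mem_support_iff.1 hi
    have := Finsupp.mem_support_iff.1 hj
    split_ifs <;> grind
  refine ⟨δ, i, j, hji.symm, ⟨?_, fun l => ?_⟩, hγ⟩
  · rw [hγ] at hdeg
    simp only [map_add, Finsupp.degree_single] at hdeg
    omega
  · have hγl := congrArg (· l) hγ
    simp only [Finsupp.coe_add, Pi.add_apply, Finsupp.single_apply] at hγl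
    by_cases hijl : i = l ∨ j = l
    · have := hle l
      split_ifs at hγl <;> grind
    obtain ⟨hil, hjl⟩ := not_or.1 hijl
    rw [if_neg hil, if_neg hjl] at hγl
    by_contra! hl
    have hl_supp : l ∈ γ.support.erase i := by
      rw [Finset.mem_erase, Finsupp.mem_support_iff]
      exact ⟨Ne.symm hil, by omega⟩
    have hγi := hmax_i l (Finset.mem_of_mem_erase hl_supp)
    have hγj := hmax_j l hl_supp
    have := γ.apply_add_apply_add_apply_le_degree hji.symm hil hjl
    omega

end Exponents

section Monomials

variable {σ R : Type*} [CommSemiring R]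

theorem monomial_add_single_add_single (δ : σ →₀ ℕ) (i j : σ) :
    monomial (δ + Finsupp.single i 1 + Finsupp.single j 1) (1 : R) =
      monomial δ 1 * (X i * X j) := by
  rw [X, X, monomial_mul, monomial_mul, one_mul, one_mul, add_assoc]

variable [LinearOrder σ]

theorem balanced_monomials_mul_X_mul_X (k : ℕ) :
    {m : MvPolynomial σ R | ∃ γ, IsBalanced k γ ∧ m = monomial γ 1} *
        {m : MvPolynomial σ R | ∃ i j : σ, i < j ∧ m = X i * X j} =
      {m | ∃ γ, IsBalanced (k + 1) γ ∧ m = monomial γ 1} := by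
  ext m
  simp only [Set.mem_mul, Set.mem_ofPred_eq]
  constructor
  · rintro ⟨_, ⟨δ, hδ, rfl⟩, _, ⟨i, j, hij, rfl⟩, rfl⟩
    exact ⟨_, hδ.add_single_add_single hij.ne, (monomial_add_single_add_single δ i j).symm⟩
  · rintro ⟨γ, hγ, rfl⟩
    obtain ⟨δ, i, j, hij, hδ, rfl⟩ := hγ.exists_eq_add_single_add_single
    rcases hij.lt_or_gt with hij | hji
    · exact ⟨_, ⟨δ, hδ, rfl⟩, _, ⟨i, j, hij, rfl⟩, (monomial_add_single_add_single δ i j).symm⟩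
    · refine ⟨_, ⟨δ, hδ, rfl⟩, _, ⟨j, i, hji, rfl⟩, ?_⟩
      rw [add_right_comm, ← monomial_add_single_add_single]

theorem span_X_mul_X_pow (k : ℕ) :
    Ideal.span {m : MvPolynomial σ R | ∃ i j : σ, i < j ∧ m = X i * X j} ^ k =
      Ideal.span {m | ∃ γ, IsBalanced k γ ∧ m = monomial γ 1} := by
  induction k with
  | zero =>
    simp only [pow_zero, Ideal.one_eq_top, isBalanced_zero_iff, exists_eq_left, ← one_def]
    exact Ideal.span_singleton_one.symm
  | succ k ih =>
    rw [pow_succ, ih, Ideal.span_mul_span, balanced_monomials_mul_X_mul_X]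

end Monomials

theorem power_of_squarefree_quadratic_ideal_general (n k : ℕ) :
    (Ideal.span {m : MvPolynomial (Fin (n + 1)) ℂ |
        ∃ i j : Fin (n + 1), i < j ∧ m = X i * X j}) ^ k =
      Ideal.span {m : MvPolynomial (Fin (n + 1)) ℂ |
        ∃ γ : Fin (n + 1) →₀ ℕ, (γ.sum fun _ e => e) = 2 * k ∧ (∀ j, γ j ≤ k) ∧
          m = monomial γ 1} := by
  simp only [span_X_mul_X_pow, IsBalanced, and_assoc]
  rfl

/-- The `k`-th power of the ideal generated by the monomials `z_i z_j`, `i < j`, in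
`ℂ[z_0, …, z_n]` is generated by the monomials `z^γ` with `|γ| = 2k` and `γ_j ≤ k` for all `j`. -/
theorem power_of_squarefree_quadratic_ideal (n k : ℕ) (hk : 1 ≤ k) :
    (Ideal.span {m : MvPolynomial (Fin (n + 1)) ℂ |
        ∃ i j : Fin (n + 1), i < j ∧ m = X i * X j}) ^ k =
      Ideal.span {m : MvPolynomial (Fin (n + 1)) ℂ |
        ∃ γ : Fin (n + 1) →₀ ℕ, (γ.sum fun _ e => e) = 2 * k ∧ (∀ j, γ j ≤ k) ∧
          m = monomial γ 1} :=
  power_of_squarefree_quadratic_ideal_general n k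
end

section
/- Let I be the ideal in C[z_0,...,z_n] generated by the monomials z_i z_j with 0 ≤ i < j ≤ n. Then the polynomial z_0 z_1 ⋯ z_n · (z_0 + z_1 + ⋯ + z_n)^{n-1} belongs to I^n. -/
open MvPolynomial

lemma key_pow_mem {m : ℕ} (I : Ideal (MvPolynomial (Fin m) ℂ))
    (hI : ∀ i j : Fin m, i ≠ j → (X i * X j : MvPolynomial (Fin m) ℂ) ∈ I) :
    ∀ (k : ℕ) (a : Fin m → ℕ), (∑ j, a j) = 2 * k → (∀ j, a j ≤ k) →
      (∏ j, (X j : MvPolynomial (Fin m) ℂ) ^ a j) ∈ I ^ k := by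
  intro k
  induction k with
  | zero =>
    intro a hsum _
    have h0 : ∀ j ∈ Finset.univ, a j = 0 := Finset.sum_eq_zero_iff.mp (by simpa using hsum)
    have h0' : ∀ j, a j = 0 := fun j => h0 j (Finset.mem_univ j)
    simp [h0', Ideal.one_eq_top]
  | succ k ih =>
    intro a hsum hle
    have hne : (Finset.univ : Finset (Fin m)).Nonempty := by
      by_contra h
      rw [Finset.not_nonempty_iff_eq_empty] at h
      rw [h] at hsum; simp at hsum
    obtain ⟨i, -, hi⟩ := Finset.exists_max_image Finset.univ a hne
    simp only [Finset.mem_univ, forall_true_left] at hi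
    have hi' : ∀ x, a x ≤ a i := hi
    have hne2 : (Finset.univ.erase i).Nonempty := by
      by_contra h
      rw [Finset.not_nonempty_iff_eq_empty] at h
      have e : ∑ j, a j = a i + ∑ j ∈ Finset.univ.erase i, a j :=
        (Finset.add_sum_erase _ a (Finset.mem_univ i)).symm
      rw [h] at e
      simp at e
      have := hle i
      omega
    obtain ⟨j, hjmem, hj⟩ := Finset.exists_max_image (Finset.univ.erase i) a hne2
    have hij : j ≠ i := Finset.ne_of_mem_erase hjmem
    have haj : 1 ≤ a j := by
      by_contra h
      push_neg at h
      have hz : ∑ x ∈ Finset.univ.erase i, a x = 0 := by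
        apply Finset.sum_eq_zero
        intro x hx
        have := hj x hx
        omega
      have e : ∑ x, a x = a i + ∑ x ∈ Finset.univ.erase i, a x :=
        (Finset.add_sum_erase _ a (Finset.mem_univ i)).symm
      have := hle i
      omega
    have hai : 1 ≤ a i := le_trans haj (hi' j)
    set a' : Fin m → ℕ :=
      Function.update (Function.update a i (a i - 1)) j (a j - 1) with ha'
    have ha'j : a' j = a j - 1 := by simp [ha']
    have ha'i : a' i = a i - 1 := by
      rw [ha', Function.update_of_ne (Ne.symm hij), Function.update_self]
    have ha'x : ∀ x, x ≠ i → x ≠ j → a' x = a x := by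
      intro x hxi hxj
      rw [ha', Function.update_of_ne hxj, Function.update_of_ne hxi]
    have e1 : ∑ l, a l = a j + (a i + ∑ x ∈ (Finset.univ.erase j).erase i, a x) := by
      rw [← Finset.add_sum_erase _ a (Finset.mem_univ j),
        ← Finset.add_sum_erase _ a
          (Finset.mem_erase.mpr ⟨Ne.symm hij, Finset.mem_univ i⟩)]
    have e2 : ∑ l, a' l
        = (a j - 1) + ((a i - 1) + ∑ x ∈ (Finset.univ.erase j).erase i, a x) := by
      rw [← Finset.add_sum_erase _ a' (Finset.mem_univ j),
        ← Finset.add_sum_erase _ a'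
          (Finset.mem_erase.mpr ⟨Ne.symm hij, Finset.mem_univ i⟩), ha'j, ha'i]
      congr 1
      congr 1
      apply Finset.sum_congr rfl
      intro x hx
      have hxi : x ≠ i := Finset.ne_of_mem_erase hx
      have hxj : x ≠ j := Finset.ne_of_mem_erase (Finset.mem_of_mem_erase hx)
      exact ha'x x hxi hxj
    have hsum' : ∑ l, a' l = 2 * k := by omega
    have hle' : ∀ l, a' l ≤ k := by
      intro l
      rcases eq_or_ne l j with rfl | hlj
      · have := hle l; omega
      rcases eq_or_ne l i with rfl | hli
      · have := hle l; omega
      rw [ha'x l hli hlj]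
      by_contra h
      push_neg at h
      have h1 : a l ≤ a j := hj l (Finset.mem_erase.mpr ⟨hli, Finset.mem_univ l⟩)
      have h2 : a j ≤ a i := hi' j
      have hsub : ({i, j, l} : Finset (Fin m)) ⊆ Finset.univ := Finset.subset_univ _
      have hs : ∑ x ∈ ({i, j, l} : Finset (Fin m)), a x = a i + a j + a l := by
        rw [Finset.sum_insert (by simp [Ne.symm hij, Ne.symm hli]),
          Finset.sum_insert (by simp [Ne.symm hlj]), Finset.sum_singleton, add_assoc]
      have hmono : ∑ x ∈ ({i, j, l} : Finset (Fin m)), a x ≤ ∑ x, a x :=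
        Finset.sum_le_sum_of_subset hsub
      have := hle i
      have := hle j
      omega
    have hextract : ∀ (b : Fin m → ℕ),
        ∏ l, (X l : MvPolynomial (Fin m) ℂ) ^ b l
          = X j ^ b j * (X i ^ b i * ∏ l ∈ (Finset.univ.erase j).erase i, X l ^ b l) := by
      intro b
      rw [← Finset.mul_prod_erase Finset.univ _ (Finset.mem_univ j),
        ← Finset.mul_prod_erase _ _
          (Finset.mem_erase.mpr ⟨Ne.symm hij, Finset.mem_univ i⟩)]
    have hprod : (∏ l, (X l : MvPolynomial (Fin m) ℂ) ^ a l)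
        = (X i * X j) * ∏ l, (X l : MvPolynomial (Fin m) ℂ) ^ a' l := by
      rw [hextract a, hextract a', ha'j, ha'i]
      have tail : ∏ l ∈ (Finset.univ.erase j).erase i, (X l : MvPolynomial (Fin m) ℂ) ^ a' l
          = ∏ l ∈ (Finset.univ.erase j).erase i, (X l : MvPolynomial (Fin m) ℂ) ^ a l := by
        apply Finset.prod_congr rfl
        intro x hx
        rw [ha'x x (Finset.ne_of_mem_erase hx)
          (Finset.ne_of_mem_erase (Finset.mem_of_mem_erase hx))]
      rw [tail]
      have hsplit : ∀ (x : MvPolynomial (Fin m) ℂ) (t : ℕ), 1 ≤ t → x ^ t = x * x ^ (t - 1) := by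
        intro x t ht
        conv_lhs => rw [show t = 1 + (t - 1) by omega]
        rw [pow_add, pow_one]
      rw [hsplit (X i) _ hai, hsplit (X j) _ haj]
      ring
    rw [hprod, pow_succ']
    exact Ideal.mul_mem_mul (hI i j (Ne.symm hij)) (ih a' hsum' hle')

/-- If `I` is the ideal of `ℂ[z_0,…,z_n]` generated by the monomials `z_i z_j`, `i < j`,
then `z_0 ⋯ z_n (z_0 + ⋯ + z_n)^{n-1} ∈ I^n`. -/
theorem product_times_sum_pow_mem_power (n : ℕ) (hn : 1 ≤ n) :
    (∏ j : Fin (n + 1), X j) * (∑ j : Fin (n + 1), X j) ^ (n - 1) ∈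
      (Ideal.span {m : MvPolynomial (Fin (n + 1)) ℂ |
        ∃ i j : Fin (n + 1), i < j ∧ m = X i * X j}) ^ n := by
  set I : Ideal (MvPolynomial (Fin (n + 1)) ℂ) :=
    Ideal.span {m : MvPolynomial (Fin (n + 1)) ℂ |
      ∃ i j : Fin (n + 1), i < j ∧ m = X i * X j} with hIdef
  have hI : ∀ i j : Fin (n + 1), i ≠ j → (X i * X j : MvPolynomial (Fin (n + 1)) ℂ) ∈ I := by
    intro i j h
    rcases h.lt_or_gt with hlt | hlt
    · exact Ideal.subset_span ⟨i, j, hlt, rfl⟩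
    · rw [mul_comm]
      exact Ideal.subset_span ⟨j, i, hlt, rfl⟩
  have hpow : ((∑ j : Fin (n + 1), X j : MvPolynomial (Fin (n + 1)) ℂ)) ^ (n - 1)
      = ∑ g ∈ Fintype.piFinset (fun _ : Fin (n - 1) => (Finset.univ : Finset (Fin (n + 1)))),
          ∏ i : Fin (n - 1), X (g i) := by
    rw [← Fin.prod_const (n - 1) ((∑ j : Fin (n + 1), X j : MvPolynomial (Fin (n + 1)) ℂ))]
    exact Finset.prod_univ_sum _ _
  rw [hpow, Finset.mul_sum]
  apply Ideal.sum_mem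
  intro g _
  set c : Fin (n + 1) → ℕ := fun j => (Finset.univ.filter (fun i => g i = j)).card with hc
  have h1 : ∏ i : Fin (n - 1), (X (g i) : MvPolynomial (Fin (n + 1)) ℂ)
      = ∏ j : Fin (n + 1), X j ^ c j := by
    rw [← Finset.prod_fiberwise_of_maps_to (fun i _ => Finset.mem_univ (g i))
      (fun i => (X (g i) : MvPolynomial (Fin (n + 1)) ℂ))]
    apply Finset.prod_congr rfl
    intro j _
    rw [Finset.prod_congr rfl (fun x hx => by rw [(Finset.mem_filter.mp hx).2]),
      Finset.prod_const]
  have h2 : (∏ j : Fin (n + 1), (X j : MvPolynomial (Fin (n + 1)) ℂ)) * ∏ j, X j ^ c j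
      = ∏ j, X j ^ (1 + c j) := by
    rw [← Finset.prod_mul_distrib]
    apply Finset.prod_congr rfl
    intro j _
    rw [pow_add, pow_one]
  rw [h1, h2]
  apply key_pow_mem I hI n (fun j => 1 + c j)
  · have hcsum : ∑ j, c j = n - 1 := by
      rw [hc, ← Finset.card_eq_sum_card_fiberwise (fun i _ => Finset.mem_univ (g i))]
      simp
    rw [Finset.sum_add_distrib, hcsum]
    simp
    omega
  · intro j
    have : c j ≤ n - 1 := le_trans (Finset.card_filter_le _ _) (by simp)
    omega
end

section
/- The map f: C^n → C^n with components f_k(z) = Σ_{A ⊆ {1,...,n}, |A|=k} ( Σ_{j∈A} z_j )^{t_k} · ( ∏_{j∈A} z_j )^{t_k}, for k = 1,...,n, where t is a common multiple of 1,...,n and t_k = t/k, has an isolated zero at the origin: f(z) = 0 implies z = 0. -/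
/-!
Let `S` be the support of a nonzero `z` and `m = #S`. Only subsets of `S` contribute to `f_k`,
so `f_m(z) = ((∑_{j ∈ S} z_j) ∏_{j ∈ S} z_j)^{t/m}` and hence `∑_{j ∈ S} z_j = 0`; in particular
`m ≥ 2`. The `(m - 1)`-subsets of `S` are the sets `S \ {i}`, and for each of them the vanishing
of the full sum gives `(∑_{S \ {i}} z_j) ∏_{S \ {i}} z_j = -z_i ∏_{S \ {i}} z_j = -∏_{S} z_j`.
Thus `f_{m-1}(z) = m (-∏_{S} z_j)^{t/(m-1)} ≠ 0`.
-/

open Finset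

namespace Finset

variable {ι M : Type*} [AddCommMonoid M]

lemma sum_powersetCard_eq_sum_powersetCard_of_subset {s t : Finset ι} (hst : s ⊆ t)
    (F : Finset ι → M) (hF : ∀ A ⊆ t, ¬ A ⊆ s → F A = 0) (k : ℕ) :
    ∑ A ∈ t.powersetCard k, F A = ∑ A ∈ s.powersetCard k, F A := by
  refine (sum_subset (powersetCard_mono hst) fun A hA hA' => ?_).symm
  obtain ⟨hAt, hk⟩ := mem_powersetCard.1 hA
  exact hF A hAt fun hAs => hA' (mem_powersetCard.2 ⟨hAs, hk⟩)

lemma sum_powersetCard_card_sub_one [DecidableEq ι] {S : Finset ι} (hS : S.Nonempty)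
    (F : Finset ι → M) :
    ∑ A ∈ S.powersetCard (#S - 1), F A = ∑ i ∈ S, F (S.erase i) := by
  refine (sum_nbij S.erase (fun i hi => ?_) S.erase_injOn (fun A hA => ?_) fun _ _ => rfl).symm
  · exact mem_powersetCard.2 ⟨erase_subset i S, card_erase_of_mem hi⟩
  · obtain ⟨hAS, hA⟩ := mem_powersetCard.1 (mem_coe.1 hA)
    obtain ⟨i, hi⟩ : ∃ i, S \ A = {i} := card_eq_one.1 <| by
      rw [card_sdiff_of_subset hAS, hA]
      have := hS.card_pos
      omega
    refine ⟨i, mem_coe.2 (mem_sdiff.1 (hi ▸ mem_singleton_self i)).1, ?_⟩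
    rw [← sdiff_singleton_eq_erase, ← hi, sdiff_sdiff_eq_self hAS]

end Finset

section

variable {ι R : Type*} [CommRing R]

/-- `f_k(z) = ∑_{#A = k} sumMulProd z A ^ (t / k)`. -/
def sumMulProd (z : ι → R) (A : Finset ι) : R :=
  (∑ j ∈ A, z j) * ∏ j ∈ A, z j

lemma sumMulProd_erase [DecidableEq ι] {z : ι → R} {S : Finset ι} (hS : ∑ j ∈ S, z j = 0)
    {i : ι} (hi : i ∈ S) :
    sumMulProd z (S.erase i) = -∏ j ∈ S, z j := by
  have hsum : ∑ j ∈ S.erase i, z j = -z i := by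
    linear_combination add_sum_erase S z hi + hS
  rw [sumMulProd, hsum, ← mul_prod_erase S z hi]
  ring

variable [Fintype ι] [IsDomain R] [CharZero R]

theorem eq_zero_of_sum_powersetCard_sumMulProd_pow_eq_zero (z : ι → R) (e : ℕ → ℕ)
    (he : ∀ k ∈ Icc 1 (Fintype.card ι), e k ≠ 0)
    (hz : ∀ k ∈ Icc 1 (Fintype.card ι),
      ∑ A ∈ powersetCard k univ, sumMulProd z A ^ e k = 0) :
    z = 0 := by
  classical
  by_contra hzne
  set S : Finset ι := {j | z j ≠ 0} with hSdef
  have hS : S.Nonempty := by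
    obtain ⟨j, hj⟩ := Function.ne_iff.1 hzne
    exact ⟨j, by simpa [hSdef] using hj⟩
  have hprod : ∏ j ∈ S, z j ≠ 0 := prod_ne_zero_iff.2 fun j hj => by simpa [hSdef] using hj
  have hm : #S ∈ Icc 1 (Fintype.card ι) := mem_Icc.2 ⟨hS.card_pos, card_le_univ S⟩
  have hrestrict :
      ∀ k ∈ Icc 1 (Fintype.card ι), ∑ A ∈ powersetCard k S, sumMulProd z A ^ e k = 0 := by
    intro k hk
    rw [← hz k hk, sum_powersetCard_eq_sum_powersetCard_of_subset (subset_univ S)]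
    intro A _ hAS
    obtain ⟨j, hj, hjS⟩ := not_subset.1 hAS
    rw [sumMulProd, prod_eq_zero hj (by simpa [hSdef] using hjS), mul_zero, zero_pow (he k hk)]
  have hsum : ∑ j ∈ S, z j = 0 := by
    have h := hrestrict _ hm
    rw [powersetCard_self, sum_singleton, pow_eq_zero_iff (he _ hm), sumMulProd] at h
    exact (mul_eq_zero.1 h).resolve_right hprod
  obtain hS1 | hS2 : #S = 1 ∨ 2 ≤ #S := by have := hS.card_pos; omega
  · obtain ⟨i, hi⟩ := card_eq_one.1 hS1
    have hzi : z i ≠ 0 := by simpa [hSdef] using (hi ▸ mem_singleton_self i : i ∈ S)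
    exact hzi (by simpa [hi] using hsum)
  · have hk : #S - 1 ∈ Icc 1 (Fintype.card ι) := by
      have := mem_Icc.1 hm
      exact mem_Icc.2 ⟨by omega, by omega⟩
    have h := hrestrict _ hk
    rw [sum_powersetCard_card_sub_one hS,
      sum_congr rfl fun i hi => by rw [sumMulProd_erase hsum hi], sum_const,
      nsmul_eq_mul, mul_eq_zero, Nat.cast_eq_zero, pow_eq_zero_iff (he _ hk),
      neg_eq_zero] at h
    exact h.elim (by omega) hprod

end

theorem isolated_zero_of_symmetric_map_general (n t : ℕ) (ht : 0 < t)
    (hdvd : ∀ k ∈ Finset.Icc 1 n, k ∣ t) (z : Fin n → ℂ)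
    (hz : ∀ k ∈ Finset.Icc 1 n,
      ∑ A ∈ Finset.powersetCard k (Finset.univ : Finset (Fin n)),
        (∑ j ∈ A, z j) ^ (t / k) * (∏ j ∈ A, z j) ^ (t / k) = 0) :
    z = 0 := by
  refine eq_zero_of_sum_powersetCard_sumMulProd_pow_eq_zero z (t / ·) ?_ ?_ <;>
    rw [Fintype.card_fin] <;> intro k hk
  · exact (Nat.div_pos (Nat.le_of_dvd ht (hdvd k hk)) (mem_Icc.1 hk).1).ne'
  · simpa only [sumMulProd, mul_pow] using hz k hk

/-- The map `f : ℂ^n → ℂ^n` with components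
`f_k(z) = Σ_{|A| = k} (Σ_{j∈A} z_j)^{t/k} (∏_{j∈A} z_j)^{t/k}`, where `t` is a common multiple
of `1, …, n`, has an isolated zero at the origin: `f(z) = 0` implies `z = 0`. -/
theorem isolated_zero_of_symmetric_map (n t : ℕ) (hn : 1 ≤ n) (ht : 0 < t)
    (hdvd : ∀ k ∈ Finset.Icc 1 n, k ∣ t) (z : Fin n → ℂ)
    (hz : ∀ k ∈ Finset.Icc 1 n,
      ∑ A ∈ Finset.powersetCard k (Finset.univ : Finset (Fin n)),
        (∑ j ∈ A, z j) ^ (t / k) * (∏ j ∈ A, z j) ^ (t / k) = 0) :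
    z = 0 :=
  isolated_zero_of_symmetric_map_general n t ht hdvd z hz
end

section
/- Let S ⊂ B^n be a finite set of N points, let K ⊂ B^n \ {0} be compact, and fix η_1 > 0. There exists δ_1 > 0, depending only on η_1, N, and min_K ‖z‖ (explicitly δ_1 = 2^{-2N} (min_K ‖z‖)^N η_1, also requiring δ_1 ≤ (1/2) min_K ‖z‖), such that for any z_1, z_2 ∈ K with ‖z_1 − z_2‖ ≤ δ_1 and S ⊂ B(0, δ_1), the holomorphic map Φ(z) = z + (P(z)/P(z_1))(z_2 − z_1), where P(z) = ∏_{a∈S} (z − a)·(z̄_1/‖z_1‖), satisfies Φ|_S = id, Φ(z_1) = z_2, and Φ(B^n) ⊆ B(0, 1+η_1). -/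
/-!
Every factor of `P` is the projection `w ↦ ⟪z₁, w⟫ / ‖z₁‖` evaluated at `z - a`, so it has norm
at most `‖z‖ + ‖a‖ ≤ 2` on the unit ball, while at `z₁` it is `‖z₁‖ - ⟪z₁, a⟫ / ‖z₁‖`, of norm at
least `‖z₁‖ - ‖a‖ ≥ ‖z₁‖ / 2`. Hence `‖P z / P z₁‖ ≤ 2 ^ (2N) / m ^ N` on the ball, where
`m = min_K ‖z‖`, and the choice of `δ₁` makes the displacement `(P z / P z₁) • (z₂ - z₁)` at
most `η₁`.
-/

open Finset

section MovingMap

variable {𝕜 E : Type*} [RCLike 𝕜] [NormedAddCommGroup E] [InnerProductSpace 𝕜 E]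

theorem norm_inner_div_norm_le (x y : E) : ‖inner 𝕜 x y / (‖x‖ : 𝕜)‖ ≤ ‖y‖ := by
  rcases eq_or_ne x 0 with rfl | hx
  · simp
  rw [norm_div, RCLike.norm_ofReal, abs_norm, div_le_iff₀ (norm_pos_iff.mpr hx), mul_comm]
  exact norm_inner_le_norm x y

theorem norm_sub_norm_le_norm_inner_sub_div_norm (x a : E) :
    ‖x‖ - ‖a‖ ≤ ‖inner 𝕜 x (x - a) / (‖x‖ : 𝕜)‖ := by
  have hself : inner 𝕜 x x / (‖x‖ : 𝕜) = ‖x‖ := by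
    rw [inner_self_eq_norm_sq_to_K, sq, mul_div_assoc]
    rcases eq_or_ne x 0 with rfl | hx
    · simp
    rw [div_self (RCLike.ofReal_ne_zero.mpr (norm_ne_zero_iff.mpr hx)), mul_one]
  calc ‖x‖ - ‖a‖ ≤ ‖x‖ - ‖inner 𝕜 x a / (‖x‖ : 𝕜)‖ := by
        gcongr; exact norm_inner_div_norm_le x a
    _ = ‖inner 𝕜 x x / (‖x‖ : 𝕜)‖ - ‖inner 𝕜 x a / (‖x‖ : 𝕜)‖ := by
        rw [hself, RCLike.norm_ofReal, abs_norm]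
    _ ≤ ‖inner 𝕜 x x / (‖x‖ : 𝕜) - inner 𝕜 x a / (‖x‖ : 𝕜)‖ := norm_sub_norm_le _ _
    _ = ‖inner 𝕜 x (x - a) / (‖x‖ : 𝕜)‖ := by rw [inner_sub_right, sub_div]

variable (𝕜) in
noncomputable def projProduct (S : Finset E) (z₁ z : E) : 𝕜 :=
  ∏ a ∈ S, inner 𝕜 z₁ (z - a) / (‖z₁‖ : 𝕜)

variable {S : Finset E} {z₁ : E}

theorem projProduct_eq_zero_of_mem {a : E} (ha : a ∈ S) : projProduct 𝕜 S z₁ a = 0 :=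
  prod_eq_zero ha (by simp)

theorem differentiable_projProduct : Differentiable 𝕜 (projProduct 𝕜 S z₁) := by
  classical
  have hfactor (a : E) : Differentiable 𝕜 fun z ↦ inner 𝕜 z₁ (z - a) / (‖z₁‖ : 𝕜) := by
    simp_rw [div_eq_mul_inv]
    exact ((innerSL 𝕜 z₁).differentiable.comp (differentiable_id.sub_const a)).mul_const _
  exact fun z ↦ (HasFDerivAt.finsetProd fun a _ ↦ (hfactor a z).hasFDerivAt).differentiableAt

theorem norm_projProduct_le {r : ℝ} (hS : ∀ a ∈ S, ‖a‖ ≤ r) (z : E) :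
    ‖projProduct 𝕜 S z₁ z‖ ≤ (‖z‖ + r) ^ #S := by
  rw [projProduct, norm_prod, ← prod_const]
  refine prod_le_prod (fun _ _ ↦ norm_nonneg _) fun a ha ↦ ?_
  calc _ ≤ ‖z - a‖ := norm_inner_div_norm_le z₁ (z - a)
    _ ≤ ‖z‖ + ‖a‖ := norm_sub_le z a
    _ ≤ ‖z‖ + r := by gcongr; exact hS a ha

theorem pow_le_norm_projProduct_self {r : ℝ} (hS : ∀ a ∈ S, ‖a‖ ≤ r) (hr : r ≤ ‖z₁‖) :
    (‖z₁‖ - r) ^ #S ≤ ‖projProduct 𝕜 S z₁ z₁‖ := by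
  rw [projProduct, norm_prod, ← prod_const]
  refine prod_le_prod (fun _ _ ↦ sub_nonneg.mpr hr) fun a ha ↦ ?_
  calc ‖z₁‖ - r ≤ ‖z₁‖ - ‖a‖ := by gcongr; exact hS a ha
    _ ≤ _ := norm_sub_norm_le_norm_inner_sub_div_norm z₁ a

theorem projProduct_self_ne_zero (hS : ∀ a ∈ S, ‖a‖ < ‖z₁‖) : projProduct 𝕜 S z₁ z₁ ≠ 0 :=
  prod_ne_zero_iff.mpr fun a ha ↦ norm_pos_iff.mp <|
    (sub_pos.mpr (hS a ha)).trans_le (norm_sub_norm_le_norm_inner_sub_div_norm z₁ a)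

theorem norm_projProduct_div_self_le {r : ℝ} (hS : ∀ a ∈ S, ‖a‖ ≤ r) (hr₀ : 0 < r)
    (hr : 2 * r ≤ ‖z₁‖) (hr₁ : r ≤ 1) {z : E} (hz : ‖z‖ ≤ 1) :
    ‖projProduct 𝕜 S z₁ z / projProduct 𝕜 S z₁ z₁‖ ≤ 2 ^ (2 * #S) / ‖z₁‖ ^ #S := by
  have hz₁ : 0 < ‖z₁‖ := by linarith
  have hlow : (‖z₁‖ / 2) ^ #S ≤ ‖projProduct 𝕜 S z₁ z₁‖ :=
    (pow_le_pow_left₀ (by positivity) (by linarith) _).trans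
      (pow_le_norm_projProduct_self hS (by linarith))
  have hup : ‖projProduct 𝕜 S z₁ z‖ ≤ 2 ^ #S :=
    (norm_projProduct_le hS z).trans
      (pow_le_pow_left₀ (by linarith [norm_nonneg z]) (by linarith) _)
  calc _ ≤ (2 : ℝ) ^ #S / (‖z₁‖ / 2) ^ #S := by
        rw [norm_div]; exact div_le_div₀ (by positivity) hup (by positivity) hlow
    _ = 2 ^ (2 * #S) / ‖z₁‖ ^ #S := by
        rw [div_pow, div_div_eq_mul_div, ← pow_add, two_mul]

variable (P : E → 𝕜) (z₁ z₂ : E)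

noncomputable def movingMap (z : E) : E := z + (P z / P z₁) • (z₂ - z₁)

variable {P z₁ z₂}

theorem Differentiable.movingMap (hP : Differentiable 𝕜 P) :
    Differentiable 𝕜 (movingMap P z₁ z₂) := by
  unfold _root_.movingMap
  fun_prop

theorem movingMap_apply_of_eq_zero {a : E} (ha : P a = 0) : movingMap P z₁ z₂ a = a := by
  simp [movingMap, ha]

theorem movingMap_apply_self (h : P z₁ ≠ 0) : movingMap P z₁ z₂ z₁ = z₂ := by
  simp [movingMap, div_self h]

theorem norm_movingMap_le (z : E) :
    ‖movingMap P z₁ z₂ z‖ ≤ ‖z‖ + ‖P z / P z₁‖ * ‖z₂ - z₁‖ :=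
  (norm_add_le _ _).trans_eq (by rw [norm_smul])

end MovingMap

theorem IsCompact.exists_norm_eq_sInf_norm_image {E : Type*} [SeminormedAddCommGroup E]
    {K : Set E} (hKc : IsCompact K) (hKne : K.Nonempty) :
    ∃ x ∈ K, ‖x‖ = sInf (norm '' K) :=
  (hKc.image continuous_norm).sInf_mem (hKne.image _)

/-- Lemma on moving one point while fixing a pole set: let `K ⊂ 𝔹^n \ {0}` be compact and
`η₁ > 0`. With `m = min_K ‖z‖` and `δ₁ = min(m/2, 2^{-2N} m^N η₁)`, for any `z₁, z₂ ∈ K`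
with `‖z₁ - z₂‖ ≤ δ₁` and any set `S` of `N` points contained in `B(0, δ₁)`, the holomorphic
map `Φ(z) = z + (P(z)/P(z₁))(z₂ - z₁)`, where `P(z) = ∏_{a ∈ S} (z-a)·(z̄₁/‖z₁‖)`,
fixes `S`, sends `z₁` to `z₂`, and maps `𝔹^n` into `B(0, 1+η₁)`. -/
theorem moving_map_exists {n N : ℕ} (η₁ : ℝ) (hη₁ : 0 < η₁)
    (K : Set (EuclideanSpace ℂ (Fin n))) (hKc : IsCompact K) (hKne : K.Nonempty)
    (hK : K ⊆ Metric.ball (0 : EuclideanSpace ℂ (Fin n)) 1 \ {0}) :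
    ∃ δ₁ > 0,
      δ₁ = min (sInf (norm '' K) / 2)
        (((2 : ℝ) ^ (2 * N))⁻¹ * sInf (norm '' K) ^ N * η₁) ∧
      ∀ z₁ ∈ K, ∀ z₂ ∈ K, ‖z₁ - z₂‖ ≤ δ₁ →
        ∀ S : Finset (EuclideanSpace ℂ (Fin n)), S.card = N →
          (∀ a ∈ S, a ∈ Metric.ball (0 : EuclideanSpace ℂ (Fin n)) δ₁) →
          ∀ P : EuclideanSpace ℂ (Fin n) → ℂ,
            (P = fun z => ∏ a ∈ S, (inner ℂ z₁ (z - a) : ℂ) / (‖z₁‖ : ℂ)) →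
          ∀ Φ : EuclideanSpace ℂ (Fin n) → EuclideanSpace ℂ (Fin n),
            (Φ = fun z => z + (P z / P z₁) • (z₂ - z₁)) →
            Differentiable ℂ Φ ∧ (∀ a ∈ S, Φ a = a) ∧ Φ z₁ = z₂ ∧
              ∀ z : EuclideanSpace ℂ (Fin n), ‖z‖ < 1 → ‖Φ z‖ < 1 + η₁ := by
  obtain ⟨x₀, hx₀K, hx₀⟩ := hKc.exists_norm_eq_sInf_norm_image hKne
  set m := sInf (norm '' K)
  obtain ⟨hm₀, hm₁⟩ : 0 < m ∧ m < 1 := by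
    obtain ⟨hx₀1, hx₀0⟩ := hK hx₀K
    rw [← hx₀]; exact ⟨norm_pos_iff.mpr hx₀0, mem_ball_zero_iff.mp hx₀1⟩
  refine ⟨_, lt_min (by linarith) (by positivity), rfl, ?_⟩
  intro z₁ hz₁ z₂ hz₂ hz₁₂ S hcard hS P hP Φ hΦ
  subst hP hΦ hcard
  have hSr : ∀ a ∈ S, ‖a‖ ≤ m / 2 := fun a ha ↦ by
    simpa using (mem_ball_zero_iff.mp (hS a ha)).le.trans (min_le_left _ _)
  have hmz₁ : m ≤ ‖z₁‖ := csInf_le (hKc.image continuous_norm).bddBelow ⟨z₁, hz₁, rfl⟩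
  have hPz₁ : projProduct ℂ S z₁ z₁ ≠ 0 :=
    projProduct_self_ne_zero fun a ha ↦ by linarith [hSr a ha]
  refine ⟨differentiable_projProduct.movingMap, fun a ha ↦ movingMap_apply_of_eq_zero
    (projProduct_eq_zero_of_mem ha), movingMap_apply_self hPz₁, fun z hz ↦ ?_⟩
  have hz₂₁ : ‖z₂ - z₁‖ ≤ ((2 : ℝ) ^ (2 * #S))⁻¹ * m ^ #S * η₁ :=
    (norm_sub_rev z₂ z₁).trans_le (hz₁₂.trans (min_le_right _ _))
  have hratio : ‖projProduct ℂ S z₁ z / projProduct ℂ S z₁ z₁‖ ≤ 2 ^ (2 * #S) / m ^ #S :=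
    (norm_projProduct_div_self_le hSr (by linarith) (by linarith) (by linarith) hz.le).trans
      (div_le_div_of_nonneg_left (by positivity) (pow_pos hm₀ _) (pow_le_pow_left₀ hm₀.le hmz₁ _))
  calc ‖movingMap (projProduct ℂ S z₁) z₁ z₂ z‖
      ≤ ‖z‖ + ‖projProduct ℂ S z₁ z / projProduct ℂ S z₁ z₁‖ * ‖z₂ - z₁‖ := norm_movingMap_le z
    _ ≤ ‖z‖ + 2 ^ (2 * #S) / m ^ #S * ((2 ^ (2 * #S))⁻¹ * m ^ #S * η₁) := by
        gcongr
    _ = ‖z‖ + η₁ := by have := hm₀.ne'; field_simp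
    _ < 1 + η₁ := by linarith
end
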